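/- arXiv:2505.02798 — 6 statements merged into one kernel-verified Lean document; each statement's English description precedes it below -/
import Mathlib

section
/- Define ℓ(y; x) = inf { ℓ ∈ ℕ : f̲(x; ℓ) ≤ y ≤ f̄(x; ℓ) }, where f̄(x; ℓ) = sup { f(x') : d(x,x') ≤ ℓ } and f̲(x; ℓ) = inf { f(x') : d(x,x') ≤ ℓ }. Then for neighboring datasets x, x' (i.e., d(x,x') ≤ 1) and any y with inf_x f(x) ≤ y ≤ sup_x f(x), we have |ℓ(y; x) − ℓ(y; x')| ≤ 1. -/
/-! If `d x x' ≤ 1`, the ball of radius `ℓ` around `x` lies in the ball of radius `ℓ + 1` around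
`x'`, so the interval `[f̲(x; ℓ), f̄(x; ℓ)]` lies in `[f̲(x'; ℓ + 1), f̄(x'; ℓ + 1)]`. Hence
`ℓ(y; x') ≤ ℓ(y; x) + 1`, and symmetrically. -/

open Set

lemma ball_subset_ball_add {X : Type*} {d : X → X → ℕ} (hsymm : ∀ a b, d a b = d b a)
    (htri : ∀ a b c, d a c ≤ d a b + d b c) {a b : X} {k : ℕ} (hab : d a b ≤ k) (ℓ : ℕ) :
    {z | d a z ≤ ℓ} ⊆ {z | d b z ≤ ℓ + k} := by
  intro z hz
  have := htri b a z
  have := hsymm a b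
  simp only [mem_ofPred_eq] at hz ⊢
  omega

lemma Icc_csInf_csSup_image_subset {X : Type*} {f : X → ℝ} (hlo : BddBelow (range f))
    (hhi : BddAbove (range f)) {s t : Set X} (hs : s.Nonempty) (hst : s ⊆ t) :
    Icc (sInf (f '' s)) (sSup (f '' s)) ⊆ Icc (sInf (f '' t)) (sSup (f '' t)) :=
  Icc_subset_Icc
    (csInf_le_csInf (hlo.mono (image_subset_range f t)) (hs.image f) (image_mono hst))
    (csSup_le_csSup (hhi.mono (image_subset_range f t)) (hs.image f) (image_mono hst))

lemma Nat.sInf_le_sInf_add {S T : Set ℕ} {k : ℕ} (hS : S.Nonempty) (h : ∀ n ∈ S, n + k ∈ T) :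
    sInf T ≤ sInf S + k :=
  Nat.sInf_le (h _ (Nat.sInf_mem hS))

theorem stmt5_general {X : Type*} (d : X → X → ℕ)
    (hd0 : ∀ a, d a a = 0) (hsymm : ∀ a b, d a b = d b a)
    (htri : ∀ a b c, d a c ≤ d a b + d b c)
    (f : X → ℝ) (hB : ∃ m M : ℝ, ∀ a, f a ∈ Set.Icc m M)
    (fbar flow : X → ℕ → ℝ)
    (hfbar : ∀ x ℓ, fbar x ℓ = sSup (f '' {x' | d x x' ≤ ℓ}))
    (hflow : ∀ x ℓ, flow x ℓ = sInf (f '' {x' | d x x' ≤ ℓ}))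
    (lev : ℝ → X → ℕ)
    (hlev : ∀ y x, lev y x = sInf {ℓ : ℕ | flow x ℓ ≤ y ∧ y ≤ fbar x ℓ})
    (x x' : X) (hnb : d x x' ≤ 1) (y : ℝ)
    (hne : {ℓ : ℕ | flow x ℓ ≤ y ∧ y ≤ fbar x ℓ}.Nonempty)
    (hne' : {ℓ : ℕ | flow x' ℓ ≤ y ∧ y ≤ fbar x' ℓ}.Nonempty) :
    |(lev y x : ℤ) - (lev y x' : ℤ)| ≤ 1 := by
  obtain ⟨m, M, hmM⟩ := hB
  have hlo : BddBelow (range f) := ⟨m, by rintro _ ⟨a, rfl⟩; exact (hmM a).1⟩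
  have hhi : BddAbove (range f) := ⟨M, by rintro _ ⟨a, rfl⟩; exact (hmM a).2⟩
  have step : ∀ a b, d a b ≤ 1 → ∀ ℓ ∈ {ℓ : ℕ | flow a ℓ ≤ y ∧ y ≤ fbar a ℓ},
      ℓ + 1 ∈ {ℓ : ℕ | flow b ℓ ≤ y ∧ y ≤ fbar b ℓ} := by
    intro a b hab ℓ hℓ
    have hball := ball_subset_ball_add hsymm htri hab ℓ
    simp only [mem_ofPred_eq, hflow, hfbar] at hℓ ⊢
    exact Icc_csInf_csSup_image_subset hlo hhi ⟨a, by simp [hd0]⟩ hball hℓ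
  have h₁ := Nat.sInf_le_sInf_add hne (step x x' hnb)
  have h₂ := Nat.sInf_le_sInf_add hne' (step x' x (hsymm x' x ▸ hnb))
  rw [← hlev, ← hlev] at h₁ h₂
  rw [abs_le]
  omega

theorem stmt5 {X : Type*} (d : X → X → ℕ)
    (hd0 : ∀ a, d a a = 0) (hsymm : ∀ a b, d a b = d b a)
    (htri : ∀ a b c, d a c ≤ d a b + d b c)
    (f : X → ℝ) (hB : ∃ m M : ℝ, ∀ a, f a ∈ Set.Icc m M)
    (fbar flow : X → ℕ → ℝ)
    (hfbar : ∀ x ℓ, fbar x ℓ = sSup (f '' {x' | d x x' ≤ ℓ}))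
    (hflow : ∀ x ℓ, flow x ℓ = sInf (f '' {x' | d x x' ≤ ℓ}))
    (lev : ℝ → X → ℕ)
    (hlev : ∀ y x, lev y x = sInf {ℓ : ℕ | flow x ℓ ≤ y ∧ y ≤ fbar x ℓ})
    (x x' : X) (hnb : d x x' ≤ 1) (y : ℝ)
    (hrange : ⨅ a, f a ≤ y ∧ y ≤ ⨆ a, f a)
    (hne : {ℓ : ℕ | flow x ℓ ≤ y ∧ y ≤ fbar x ℓ}.Nonempty)
    (hne' : {ℓ : ℕ | flow x' ℓ ≤ y ∧ y ≤ fbar x' ℓ}.Nonempty) :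
    |(lev y x : ℤ) - (lev y x' : ℤ)| ≤ 1 :=
  stmt5_general d hd0 hsymm htri f hB fbar flow hfbar hflow lev hlev x x' hnb y hne hne'
end

section
/- Let f : X → ℝ^d and suppose functions R_ℓ : X → ℝ (ℓ ≥ 1) satisfy: for all neighboring x, x', R_ℓ(x) ≤ R_{ℓ+1}(x') and R_1(x) ≥ ‖f(x) − f(x')‖_p. Define 𝓡_ℓ(x) = Σ_{k=1}^{ℓ} R_k(x) and ℓ̃(y; x) = inf{ ℓ : 𝓡_ℓ(x) ≥ ‖y − f(x)‖_p }. Then for any neighboring x, x' and any y, |ℓ̃(y; x) − ℓ̃(y; x')| ≤ 1. -/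
/-!
A point `y` within distance `𝓡_ℓ(x)` of `f x` is within distance `𝓡_{ℓ+1}(x')` of `f x'`:
the extra term `R_1(x')` pays for `‖f x - f x'‖`, and the shifted terms `R_{k+1}(x')` dominate
`R_k(x)`. Hence each threshold index exceeds the other by at most one.
-/

open Finset

theorem Nat.sInf_le_sInf_add_one {s t : Set ℕ} (hst : ∀ n ∈ s, n + 1 ∈ t) (hs : s.Nonempty) :
    sInf t ≤ sInf s + 1 :=
  Nat.sInf_le (hst _ (Nat.sInf_mem hs))

theorem sum_Icc_one_add_le_sum_Icc_one_succ {M : Type*} [AddCommMonoid M] [PartialOrder M]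
    [IsOrderedAddMonoid M] {ρ σ : ℕ → M} (hρσ : ∀ k, 1 ≤ k → ρ k ≤ σ (k + 1)) (ℓ : ℕ) :
    ∑ k ∈ Icc 1 ℓ, ρ k + σ 1 ≤ ∑ k ∈ Icc 1 (ℓ + 1), σ k := by
  induction ℓ with
  | zero => simp
  | succ n ih =>
    rw [sum_Icc_succ_top (by omega), sum_Icc_succ_top (by omega : 1 ≤ n + 1 + 1),
      add_right_comm]
    exact add_le_add ih (hρσ (n + 1) (by omega))

theorem norm_sub_le_sum_Icc_succ_of_le_sum_Icc {V : Type*} [SeminormedAddGroup V] {y z w : V}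
    {ρ σ : ℕ → ℝ} (hρσ : ∀ k, 1 ≤ k → ρ k ≤ σ (k + 1)) (hzw : ‖w - z‖ ≤ σ 1) {ℓ : ℕ}
    (h : ‖y - z‖ ≤ ∑ k ∈ Icc 1 ℓ, ρ k) :
    ‖y - w‖ ≤ ∑ k ∈ Icc 1 (ℓ + 1), σ k :=
  calc ‖y - w‖ ≤ ‖y - z‖ + ‖w - z‖ := by
        simpa only [norm_sub_rev z w] using norm_sub_le_norm_sub_add_norm_sub y z w
    _ ≤ ∑ k ∈ Icc 1 ℓ, ρ k + σ 1 := add_le_add h hzw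
    _ ≤ ∑ k ∈ Icc 1 (ℓ + 1), σ k := sum_Icc_one_add_le_sum_Icc_one_succ hρσ ℓ

theorem stmt12_general {X V : Type*} [NormedAddCommGroup V] (d : X → X → ℕ)
    (hsymm : ∀ a b, d a b = d b a)
    (f : X → V) (R : ℕ → X → ℝ)
    (hR1 : ∀ a b : X, d a b ≤ 1 → ∀ ℓ : ℕ, 1 ≤ ℓ → R ℓ a ≤ R (ℓ + 1) b)
    (hR2 : ∀ a b : X, d a b ≤ 1 → ‖f a - f b‖ ≤ R 1 a)
    (RR : ℕ → X → ℝ) (hRR : ∀ ℓ a, RR ℓ a = ∑ k ∈ Finset.Icc 1 ℓ, R k a)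
    (ltil : V → X → ℕ)
    (hltil : ∀ y a, ltil y a = sInf {ℓ : ℕ | ‖y - f a‖ ≤ RR ℓ a})
    (x x' : X) (hnb : d x x' ≤ 1) (y : V)
    (hne : {ℓ : ℕ | ‖y - f x‖ ≤ RR ℓ x}.Nonempty) :
    |(ltil y x : ℤ) - (ltil y x' : ℤ)| ≤ 1 := by
  have step : ∀ a b, d a b ≤ 1 → ∀ ℓ ∈ {ℓ : ℕ | ‖y - f a‖ ≤ RR ℓ a},
      ℓ + 1 ∈ {ℓ : ℕ | ‖y - f b‖ ≤ RR ℓ b} := by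
    intro a b hab ℓ hℓ
    simp only [Set.mem_ofPred_eq, hRR] at hℓ ⊢
    exact norm_sub_le_sum_Icc_succ_of_le_sum_Icc (hR1 a b hab) (hR2 b a (hsymm a b ▸ hab)) hℓ
  have hx'x : d x' x ≤ 1 := hsymm x x' ▸ hnb
  have hne' : {ℓ : ℕ | ‖y - f x'‖ ≤ RR ℓ x'}.Nonempty :=
    ⟨_, step x x' hnb _ (Nat.sInf_mem hne)⟩
  have h₁ := Nat.sInf_le_sInf_add_one (step x x' hnb) hne
  have h₂ := Nat.sInf_le_sInf_add_one (step x' x hx'x) hne'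
  rw [hltil, hltil, abs_sub_le_iff]
  omega

theorem stmt12 {X V : Type*} [NormedAddCommGroup V] (d : X → X → ℕ)
    (hsymm : ∀ a b, d a b = d b a)
    (f : X → V) (R : ℕ → X → ℝ)
    (hR1 : ∀ a b : X, d a b ≤ 1 → ∀ ℓ : ℕ, 1 ≤ ℓ → R ℓ a ≤ R (ℓ + 1) b)
    (hR2 : ∀ a b : X, d a b ≤ 1 → ‖f a - f b‖ ≤ R 1 a)
    (RR : ℕ → X → ℝ) (hRR : ∀ ℓ a, RR ℓ a = ∑ k ∈ Finset.Icc 1 ℓ, R k a)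
    (ltil : V → X → ℕ)
    (hltil : ∀ y a, ltil y a = sInf {ℓ : ℕ | ‖y - f a‖ ≤ RR ℓ a})
    (x x' : X) (hnb : d x x' ≤ 1) (y : V)
    (hne : {ℓ : ℕ | ‖y - f x‖ ≤ RR ℓ x}.Nonempty)
    (hne' : {ℓ : ℕ | ‖y - f x'‖ ≤ RR ℓ x'}.Nonempty) :
    |(ltil y x : ℤ) - (ltil y x' : ℤ)| ≤ 1 :=
  stmt12_general d hsymm f R hR1 hR2 RR hRR ltil hltil x x' hnb y hne
end

section
/- Let Δ(x) = sup_{x': d(x,x') ≤ 1} ‖f(x) − f(x')‖_p and Δ' = sup_{x,x': d(x,x') ≤ 1} |Δ(x) − Δ(x')|. Then R_ℓ(x) = Δ(x) + (ℓ − 1)·Δ' satisfies the radius bounding conditions: R_1(x) ≥ ‖f(x) − f(x')‖_p and R_ℓ(x) ≤ R_{ℓ+1}(x') for all neighboring x, x' and ℓ ≥ 1. -/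
theorem stmt15_general {X V : Type*} [NormedAddCommGroup V] (d : X → X → ℕ)
    (f : X → V) (Δloc : X → ℝ) (Δ' : ℝ)
    (hΔloc : ∀ a, Δloc a = sSup {r : ℝ | ∃ b, d a b ≤ 1 ∧ r = ‖f a - f b‖})
    (hbddloc : ∀ a, BddAbove {r : ℝ | ∃ b, d a b ≤ 1 ∧ r = ‖f a - f b‖})
    (hΔ' : Δ' = sSup {r : ℝ | ∃ a b, d a b ≤ 1 ∧ r = |Δloc a - Δloc b|})
    (hbdd' : BddAbove {r : ℝ | ∃ a b, d a b ≤ 1 ∧ r = |Δloc a - Δloc b|})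
    (R : ℕ → X → ℝ)
    (hR : ∀ (ℓ : ℕ) (a : X), R ℓ a = Δloc a + ((ℓ : ℝ) - 1) * Δ')
    (x x' : X) (hnb : d x x' ≤ 1) (ℓ : ℕ) :
    ‖f x - f x'‖ ≤ R 1 x ∧ R ℓ x ≤ R (ℓ + 1) x' := by
  have hf : ‖f x - f x'‖ ≤ Δloc x := hΔloc x ▸ le_csSup (hbddloc x) ⟨x', hnb, rfl⟩
  have hΔ : |Δloc x - Δloc x'| ≤ Δ' := hΔ' ▸ le_csSup hbdd' ⟨x, x', hnb, rfl⟩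
  refine ⟨by simpa [hR] using hf, ?_⟩
  rw [hR, hR]
  push_cast
  linarith [le_abs_self (Δloc x - Δloc x')]

theorem stmt15 {X V : Type*} [NormedAddCommGroup V] (d : X → X → ℕ)
    (f : X → V) (Δloc : X → ℝ) (Δ' : ℝ)
    (hΔloc : ∀ a, Δloc a = sSup {r : ℝ | ∃ b, d a b ≤ 1 ∧ r = ‖f a - f b‖})
    (hbddloc : ∀ a, BddAbove {r : ℝ | ∃ b, d a b ≤ 1 ∧ r = ‖f a - f b‖})
    (hΔ' : Δ' = sSup {r : ℝ | ∃ a b, d a b ≤ 1 ∧ r = |Δloc a - Δloc b|})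
    (hbdd' : BddAbove {r : ℝ | ∃ a b, d a b ≤ 1 ∧ r = |Δloc a - Δloc b|})
    (R : ℕ → X → ℝ)
    (hR : ∀ (ℓ : ℕ) (a : X), R ℓ a = Δloc a + ((ℓ : ℝ) - 1) * Δ')
    (x x' : X) (hnb : d x x' ≤ 1) (ℓ : ℕ) (hℓ : 1 ≤ ℓ) :
    ‖f x - f x'‖ ≤ R 1 x ∧ R ℓ x ≤ R (ℓ + 1) x' :=
  stmt15_general d f Δloc Δ' hΔloc hbddloc hΔ' hbdd' R hR x x' hnb ℓ
end

section
/- Let Z be a random variable obtained by first sampling an interval index (𝟙, ℓ) with 𝟙 ∈ {±1}, ℓ ≥ 1, with probability proportional to exp(−ℓε/2)·Δ_{𝟙ℓ} where Δ_{𝟙ℓ} > 0 are interval lengths, and then sampling z from the truncated exponential distribution on [0, Δ_{𝟙ℓ}] with rate ε/(2Δ_{𝟙ℓ}), returning the point at signed distance within the chosen interval. Then for any two outputs y, y' in intervals (1, ℓ) and (−1, ℓ') respectively, the ratio of densities equals exp((q(y) − q(y'))·ε/2), where −q(y) = ℓ + (offset of y within its interval)/Δ_{1ℓ} and similarly for y'.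 Consequently Z is distributed as the exponential mechanism with quality score q. -/
/-! The weight `Δ` of the chosen interval cancels the `1/Δ` in the truncated exponential density,
so the density at offset `w` in interval `ℓ` is a constant, the same for every interval, times
`exp (-(ℓ + w / Δ) ε / 2)`; the ratio of two densities is therefore `exp ((q - q') ε / 2)`. -/

lemma twoStepDensity_eq (ε Z n Δ w : ℝ) (hΔ : Δ ≠ 0) :
    Real.exp (-n * ε / 2) * Δ / Z *
        ((ε / 2) / Δ * Real.exp (-w * (ε / 2) / Δ) / (1 - Real.exp (-ε / 2))) =
      Real.exp (-(n + w / Δ) * ε / 2) * ((ε / 2) / (Z * (1 - Real.exp (-ε / 2)))) := by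
  rw [show -(n + w / Δ) * ε / 2 = -n * ε / 2 + -w * (ε / 2) / Δ by field_simp; ring,
    Real.exp_add]
  field_simp

theorem stmt16_general (ε : ℝ) (hε : 0 < ε) (Δp Δm : ℕ → ℝ)
    (hΔp : ∀ ℓ : ℕ, 1 ≤ ℓ → 0 < Δp ℓ) (hΔm : ∀ ℓ : ℕ, 1 ≤ ℓ → 0 < Δm ℓ)
    (Zsum : ℝ)
    (hZpos : 0 < Zsum)
    (π : Bool → ℕ → ℝ → ℝ)
    (hπ : ∀ (s : Bool) (ℓ : ℕ) (z : ℝ),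
      π s ℓ z =
        (Real.exp (-(ℓ : ℝ) * ε / 2) * (if s then Δp ℓ else Δm ℓ) / Zsum) *
          ((ε / 2) / (if s then Δp ℓ else Δm ℓ) *
              Real.exp (-z * (ε / 2) / (if s then Δp ℓ else Δm ℓ)) /
            (1 - Real.exp (-ε / 2))))
    (ℓ ℓ' : ℕ) (hℓ : 1 ≤ ℓ) (hℓ' : 1 ≤ ℓ')
    (z z' : ℝ)
    (q q' : ℝ)
    (hq : -q = (ℓ : ℝ) + z / Δp ℓ) (hq' : -q' = (ℓ' : ℝ) + z' / Δm ℓ') :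
    π true ℓ z / π false ℓ' z' = Real.exp ((q - q') * ε / 2) := by
  have hC : (ε / 2) / (Zsum * (1 - Real.exp (-ε / 2))) ≠ 0 := by
    have : 0 < 1 - Real.exp (-ε / 2) := sub_pos.2 (Real.exp_lt_one_iff.2 (by linarith))
    positivity
  rw [hπ, hπ, if_pos rfl, if_neg Bool.false_ne_true,
    twoStepDensity_eq _ _ _ _ _ (hΔp ℓ hℓ).ne', twoStepDensity_eq _ _ _ _ _ (hΔm ℓ' hℓ').ne',
    mul_div_mul_right _ _ hC, ← Real.exp_sub, ← hq, ← hq']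
  ring_nf

/-- Two-step sampling density for the piecewise Laplace mechanism: first draw an
interval `(s, ℓ)` (sign `s`, index `ℓ ≥ 1`) with probability proportional to
`exp(-ℓ ε/2) · Δ_{sℓ}`, then draw an offset from the truncated exponential on
`[0, Δ_{sℓ}]` with rate `ε/(2Δ_{sℓ})`.  The ratio of densities at two outputs
equals `exp((q(y) - q(y')) ε / 2)` for the piecewise Laplace quality score. -/
theorem stmt16 (ε : ℝ) (hε : 0 < ε) (Δp Δm : ℕ → ℝ)
    (hΔp : ∀ ℓ : ℕ, 1 ≤ ℓ → 0 < Δp ℓ) (hΔm : ∀ ℓ : ℕ, 1 ≤ ℓ → 0 < Δm ℓ)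
    (Zsum : ℝ)
    (hZ : Zsum = ∑' ℓ : ℕ,
      Real.exp (-((ℓ : ℝ) + 1) * ε / 2) * (Δp (ℓ + 1) + Δm (ℓ + 1)))
    (hZpos : 0 < Zsum)
    (π : Bool → ℕ → ℝ → ℝ)
    (hπ : ∀ (s : Bool) (ℓ : ℕ) (z : ℝ),
      π s ℓ z =
        (Real.exp (-(ℓ : ℝ) * ε / 2) * (if s then Δp ℓ else Δm ℓ) / Zsum) *
          ((ε / 2) / (if s then Δp ℓ else Δm ℓ) *
              Real.exp (-z * (ε / 2) / (if s then Δp ℓ else Δm ℓ)) /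
            (1 - Real.exp (-ε / 2))))
    (ℓ ℓ' : ℕ) (hℓ : 1 ≤ ℓ) (hℓ' : 1 ≤ ℓ')
    (z z' : ℝ) (hz : z ∈ Set.Icc 0 (Δp ℓ)) (hz' : z' ∈ Set.Icc 0 (Δm ℓ'))
    (q q' : ℝ)
    (hq : -q = (ℓ : ℝ) + z / Δp ℓ) (hq' : -q' = (ℓ' : ℝ) + z' / Δm ℓ') :
    π true ℓ z / π false ℓ' z' = Real.exp ((q - q') * ε / 2) :=
  stmt16_general ε hε Δp Δm hΔp hΔm Zsum hZpos π hπ ℓ ℓ' hℓ hℓ' z z' q q' hq hq'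
end

section
/- Let M_plm be the distribution on ℝ with density proportional to exp(q_plm(y;x)·ε/2), and M_inv the distribution with density proportional to exp(−ℓ(y;x)·ε/2), where q_plm and ℓ are the piecewise Laplace quality score and the interval index, on a bounded output range. Assume both can be sampled by first choosing interval (𝟙, ℓ) with probability proportional to exp(−ℓε/2)·Δ_{𝟙ℓ} and then sampling within the interval — from the truncated exponential with rate ε/(2Δ_{𝟙ℓ}) for M_plm, and uniformly for M_inv. Then for every α ≥ 0, P[|M_plm − f(x)| ≤ α] ≥ P[|M_inv − f(x)| ≤ α]. -/
/-!
Within an interval of length `Δ`, the piecewise Laplace mechanism puts mass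
`truncExpCDF c Δ t` on the first `t` of it (with `c = ε / 2`), the uniform mechanism puts
mass `t / Δ`. Since `exp` is convex, its graph on `[-c, 0]` lies below the chord, i.e.
`x (1 - exp (-c)) ≤ 1 - exp (-x c)` for `x ∈ [0, 1]`; so the truncated exponential CDF
dominates the uniform one on every interval, and summing against the common interval weights
gives the claim.
-/

open Real

/-- CDF at `t ∈ [0, Δ]` of the exponential distribution of rate `c / Δ` truncated to `[0, Δ]`. -/
noncomputable def truncExpCDF (c Δ t : ℝ) : ℝ :=
  (1 - exp (-t * c / Δ)) / (1 - exp (-c))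

lemma mul_one_sub_exp_neg_le {x : ℝ} (c : ℝ) (hx₀ : 0 ≤ x) (hx₁ : x ≤ 1) :
    x * (1 - exp (-c)) ≤ 1 - exp (-x * c) := by
  have h := convexOn_exp.2 (Set.mem_univ 0) (Set.mem_univ (-c)) (sub_nonneg.2 hx₁) hx₀
    (sub_add_cancel 1 x)
  simp only [smul_eq_mul, mul_zero, zero_add, exp_zero, mul_one, mul_neg, ← neg_mul] at h
  linarith

lemma one_sub_exp_neg_pos {c : ℝ} (hc : 0 < c) : 0 < 1 - exp (-c) :=
  sub_pos.2 (exp_lt_one_iff.2 (neg_lt_zero.2 hc))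

lemma div_le_truncExpCDF {c Δ t : ℝ} (hc : 0 < c) (hΔ : 0 < Δ) (ht₀ : 0 ≤ t) (htΔ : t ≤ Δ) :
    t / Δ ≤ truncExpCDF c Δ t := by
  rw [truncExpCDF, le_div_iff₀ (one_sub_exp_neg_pos hc), show -t * c / Δ = -(t / Δ) * c by ring]
  exact mul_one_sub_exp_neg_le c (div_nonneg ht₀ hΔ.le) ((div_le_one hΔ).2 htΔ)

lemma truncExpCDF_le_one {c Δ t : ℝ} (hc : 0 < c) (hΔ : 0 < Δ) (htΔ : t ≤ Δ) :
    truncExpCDF c Δ t ≤ 1 := by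
  rw [truncExpCDF, div_le_one (one_sub_exp_neg_pos hc)]
  have harg : -c ≤ -t * c / Δ := by
    rw [le_div_iff₀ hΔ]
    nlinarith
  linarith [exp_le_exp.2 harg]

lemma tsum_mul_le_tsum_mul_of_le_one {ι : Type*} {w a b : ι → ℝ} (hw : ∀ i, 0 ≤ w i)
    (hwsum : Summable w) (ha : ∀ i, 0 ≤ a i) (hab : ∀ i, a i ≤ b i) (hb : ∀ i, b i ≤ 1) :
    ∑' i, w i * a i ≤ ∑' i, w i * b i := by
  have hwa : ∀ i, 0 ≤ w i * a i := fun i => mul_nonneg (hw i) (ha i)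
  have hle : ∀ i, w i * a i ≤ w i * b i := fun i => mul_le_mul_of_nonneg_left (hab i) (hw i)
  have hwb : Summable fun i => w i * b i :=
    hwsum.of_nonneg_of_le (fun i => (hwa i).trans (hle i))
      (fun i => mul_le_of_le_one_right (hw i) (hb i))
  exact (hwb.of_nonneg_of_le hwa hle).tsum_le_tsum hle hwb

theorem stmt18_general (ε : ℝ) (hε : 0 < ε) {ι : Type*}
    (w Δ : ι → ℝ) (hw : ∀ i, 0 ≤ w i) (hΔ : ∀ i, 0 < Δ i)
    (hwsum : Summable w)
    (t : ι → ℝ → ℝ) (ht : ∀ (i : ι) (α : ℝ), 0 ≤ α → t i α ∈ Set.Icc 0 (Δ i))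
    (Pplm Pinv : ℝ → ℝ)
    (hPplm : ∀ α : ℝ, 0 ≤ α → Pplm α =
      ∑' i, w i * ((1 - Real.exp (-(t i α) * (ε / 2) / Δ i)) /
        (1 - Real.exp (-ε / 2))))
    (hPinv : ∀ α : ℝ, 0 ≤ α → Pinv α = ∑' i, w i * (t i α / Δ i))
    (α : ℝ) (hα : 0 ≤ α) :
    Pinv α ≤ Pplm α := by
  rw [hPplm α hα, hPinv α hα, neg_div 2 ε]
  have hc : 0 < ε / 2 := half_pos hε
  exact tsum_mul_le_tsum_mul_of_le_one hw hwsum (fun i => div_nonneg (ht i α hα).1 (hΔ i).le)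
    (fun i => div_le_truncExpCDF hc (hΔ i) (ht i α hα).1 (ht i α hα).2)
    (fun i => truncExpCDF_le_one hc (hΔ i) (ht i α hα).2)

/-- Both mechanisms choose interval `i` with the same probability `w i`; within
the interval (of length `Δ i`, of which `t i α` lies within distance `α` of
`f(x)`), the piecewise Laplace mechanism samples from the truncated exponential
with rate `ε/(2 Δ i)` while the inverse sensitivity mechanism samples
uniformly.  Then the piecewise Laplace mechanism is at least as concentrated
around `f(x)`. -/
theorem stmt18 (ε : ℝ) (hε : 0 < ε) {ι : Type*} [Countable ι]
    (w Δ : ι → ℝ) (hw : ∀ i, 0 ≤ w i) (hΔ : ∀ i, 0 < Δ i)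
    (hwsum : Summable w)
    (t : ι → ℝ → ℝ) (ht : ∀ (i : ι) (α : ℝ), 0 ≤ α → t i α ∈ Set.Icc 0 (Δ i))
    (Pplm Pinv : ℝ → ℝ)
    (hPplm : ∀ α : ℝ, 0 ≤ α → Pplm α =
      ∑' i, w i * ((1 - Real.exp (-(t i α) * (ε / 2) / Δ i)) /
        (1 - Real.exp (-ε / 2))))
    (hPinv : ∀ α : ℝ, 0 ≤ α → Pinv α = ∑' i, w i * (t i α / Δ i))
    (α : ℝ) (hα : 0 ≤ α) :
    Pinv α ≤ Pplm α :=
  stmt18_general ε hε w Δ hw hΔ hwsum t ht Pplm Pinv hPplm hPinv α hα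
end

section
/- Let q : Y × X → ℝ be a quality score with sensitivity at most Δ_q (i.e., |q(y,x) − q(y,x')| ≤ Δ_q for all neighboring x, x' and all y), and let M_q(x) have density proportional to exp(ε·q(y,x)/2) over a measurable output space Y with finite normalizer. Then for all neighboring x, x' and measurable S ⊆ Y: P[M_q(x) ∈ S] ≤ e^{ε·Δ_q} · P[M_q(x') ∈ S]; i.e., the exponential mechanism is (ε·Δ_q)-differentially private. -/
/-!
A change of the score by at most `Δq` changes the unnormalised density `exp (ε q / 2)` by a
factor at most `exp (ε Δq / 2)` pointwise, in both directions. Integrating, the mass of `S`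
grows by at most that factor and the normaliser shrinks by at most that factor, so the
normalised mass of `S` grows by at most `exp (ε Δq / 2) ^ 2 = exp (ε Δq)`.
-/

open MeasureTheory

lemma div_le_sq_mul_div_of_le_mul {A B A' B' c : ℝ} (hA : 0 ≤ A) (hB : 0 ≤ B) (hB' : 0 ≤ B')
    (hAA' : A ≤ c * A') (hBB' : B ≤ c * B') (hB'B : B' ≤ c * B) :
    A / B ≤ c ^ 2 * (A' / B') := by
  rcases hB'.eq_or_lt with rfl | hB'pos
  · rw [mul_zero] at hBB'
    simp [div_nonpos_of_nonneg_of_nonpos hA hBB']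
  have hBpos : 0 < B := hB.lt_of_ne (by rintro rfl; linarith)
  rw [mul_div_assoc', div_le_div_iff₀ hBpos hB'pos]
  calc A * B' ≤ c * A' * B' := by gcongr
    _ ≤ c * A' * (c * B) := by gcongr; linarith
    _ = c ^ 2 * A' * B := by ring

lemma Real.exp_mul_div_two_le_of_abs_sub_le {ε a b Δ : ℝ} (hε : 0 ≤ ε) (hab : |a - b| ≤ Δ) :
    Real.exp (ε * a / 2) ≤ Real.exp (ε * Δ / 2) * Real.exp (ε * b / 2) := by
  rw [← Real.exp_add, Real.exp_le_exp]
  nlinarith [(abs_le.mp hab).2]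

section

variable {Y : Type*} [MeasurableSpace Y] {μ : Measure Y} {f g : Y → ℝ} {c : ℝ}

lemma integral_le_const_mul_integral (hf : ∀ y, 0 ≤ f y) (hg : Integrable g μ)
    (hfg : ∀ y, f y ≤ c * g y) : ∫ y, f y ∂μ ≤ c * ∫ y, g y ∂μ := by
  rw [← integral_const_mul]
  exact integral_mono_of_nonneg (.of_forall hf) (hg.const_mul c) (.of_forall hfg)

lemma setIntegral_div_integral_le_sq_mul (hf : ∀ y, 0 ≤ f y) (hg : ∀ y, 0 ≤ g y)
    (hfi : Integrable f μ) (hgi : Integrable g μ)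
    (hfg : ∀ y, f y ≤ c * g y) (hgf : ∀ y, g y ≤ c * f y) (S : Set Y) :
    (∫ y in S, f y ∂μ) / (∫ y, f y ∂μ) ≤ c ^ 2 * ((∫ y in S, g y ∂μ) / (∫ y, g y ∂μ)) :=
  div_le_sq_mul_div_of_le_mul (setIntegral_nonneg_of_ae (.of_forall hf))
    (integral_nonneg hf) (integral_nonneg hg) (integral_le_const_mul_integral hf hgi.restrict hfg)
    (integral_le_const_mul_integral hf hgi hfg) (integral_le_const_mul_integral hg hfi hgf)

end

theorem stmt19_general {X Y : Type*} [MeasurableSpace Y] (μ : Measure Y)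
    (d : X → X → ℕ) (q : Y → X → ℝ) (ε Δq : ℝ) (hε : 0 < ε)
    (hsens : ∀ (y : Y) (a b : X), d a b ≤ 1 → |q y a - q y b| ≤ Δq)
    (hInt : ∀ a : X, Integrable (fun y => Real.exp (ε * q y a / 2)) μ)
    (x x' : X) (hnb : d x x' ≤ 1) (S : Set Y) :
    (∫ y in S, Real.exp (ε * q y x / 2) ∂μ) /
        (∫ y, Real.exp (ε * q y x / 2) ∂μ) ≤
      Real.exp (ε * Δq) *
        ((∫ y in S, Real.exp (ε * q y x' / 2) ∂μ) /
          (∫ y, Real.exp (ε * q y x' / 2) ∂μ)) := by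
  have hexp : Real.exp (ε * Δq) = Real.exp (ε * Δq / 2) ^ 2 := by
    rw [← Real.exp_nat_mul]; ring_nf
  rw [hexp]
  exact setIntegral_div_integral_le_sq_mul (fun _ => (Real.exp_pos _).le)
    (fun _ => (Real.exp_pos _).le) (hInt x) (hInt x')
    (fun y => Real.exp_mul_div_two_le_of_abs_sub_le hε.le (hsens y x x' hnb))
    (fun y => Real.exp_mul_div_two_le_of_abs_sub_le hε.le
      (abs_sub_comm (q y x) _ ▸ hsens y x x' hnb)) S

theorem stmt19 {X Y : Type*} [MeasurableSpace Y] (μ : Measure Y)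
    (d : X → X → ℕ) (q : Y → X → ℝ) (ε Δq : ℝ) (hε : 0 < ε) (hΔq : 0 ≤ Δq)
    (hsens : ∀ (y : Y) (a b : X), d a b ≤ 1 → |q y a - q y b| ≤ Δq)
    (hInt : ∀ a : X, Integrable (fun y => Real.exp (ε * q y a / 2)) μ)
    (hpos : ∀ a : X, 0 < ∫ y, Real.exp (ε * q y a / 2) ∂μ)
    (x x' : X) (hnb : d x x' ≤ 1) (S : Set Y) (hS : MeasurableSet S) :
    (∫ y in S, Real.exp (ε * q y x / 2) ∂μ) /
        (∫ y, Real.exp (ε * q y x / 2) ∂μ) ≤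
      Real.exp (ε * Δq) *
        ((∫ y in S, Real.exp (ε * q y x' / 2) ∂μ) /
          (∫ y, Real.exp (ε * q y x' / 2) ∂μ)) :=
  stmt19_general μ d q ε Δq hε hsens hInt x x' hnb S
end
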